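/- Let Y be a real Gaussian random variable with mean μ and standard deviation σ > 0, and let y* ∈ ℝ. Then the expected improvement E[max(y* − Y, 0)] admits the closed form E[max(y* − Y, 0)] = (y* − μ)·Φ((y* − μ)/σ) + σ·φ((y* − μ)/σ), where φ and Φ are the probability density function and cumulative distribution function of the standard normal distribution, respectively. -/

import Mathlib

open MeasureTheory ProbabilityTheory
open Filter

/-- Standard normal probability density function `φ(z) = (2π)^{-1/2} exp(-z²/2)`. -/
noncomputable def stdNormalPDF (z : ℝ) : ℝ :=
  (Real.sqrt (2 * Real.pi))⁻¹ * Real.exp (-z ^ 2 / 2)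

/-- Standard normal cumulative distribution function `Φ(z) = ∫_{-∞}^z φ(t) dt`. -/
noncomputable def stdNormalCDF (z : ℝ) : ℝ :=
  ∫ t in Set.Iic z, stdNormalPDF t

lemma stdNormalPDF_eq_gaussian : gaussianPDFReal 0 1 = stdNormalPDF := by
  funext x
  simp [gaussianPDFReal, stdNormalPDF, neg_div]

lemma integrable_stdNormalPDF : Integrable stdNormalPDF := by
  have h : Integrable (fun x : ℝ => Real.exp (-(1/2) * x ^ 2)) := integrable_exp_neg_mul_sq (by norm_num)
  have he : stdNormalPDF = fun x : ℝ => (Real.sqrt (2 * Real.pi))⁻¹ * Real.exp (-(1/2) * x ^ 2) := by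
    funext x; simp only [stdNormalPDF]; congr 1; ring
  rw [he]; exact h.const_mul _

lemma integrable_mul_stdNormalPDF : Integrable (fun z : ℝ => z * stdNormalPDF z) := by
  have h : Integrable (fun x : ℝ => x * Real.exp (-(1/2) * x ^ 2)) := integrable_mul_exp_neg_mul_sq (by norm_num)
  have he : (fun z : ℝ => z * stdNormalPDF z)
      = fun x : ℝ => (Real.sqrt (2 * Real.pi))⁻¹ * (x * Real.exp (-(1/2) * x ^ 2)) := by
    funext x; simp only [stdNormalPDF]; rw [show -x^2/2 = -(1/2)*x^2 by ring]; ring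
  rw [he]; exact h.const_mul _

lemma hasDerivAt_neg_stdNormalPDF (x : ℝ) :
    HasDerivAt (fun z => -stdNormalPDF z) (x * stdNormalPDF x) x := by
  have h1 : HasDerivAt (fun z : ℝ => -z ^ 2 / 2) (-x) x := by
    have := ((hasDerivAt_pow 2 x).neg).div_const 2
    exact this.congr_deriv (by push_cast; ring)
  have h2 := (h1.exp.const_mul (Real.sqrt (2 * Real.pi))⁻¹).neg
  exact h2.congr_deriv (by simp only [stdNormalPDF]; ring)

lemma tendsto_stdNormalPDF_atBot : Tendsto (fun z => -stdNormalPDF z) atBot (nhds 0) := by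
  have h1 : Tendsto (fun z : ℝ => -z ^ 2 / 2) atBot atBot := by
    apply Filter.Tendsto.atBot_div_const (by norm_num : (0:ℝ) < 2)
    apply Filter.tendsto_neg_atTop_atBot.comp
    have : Tendsto (fun z : ℝ => |z| ^ 2) atBot atTop :=
      (tendsto_pow_atTop (two_ne_zero)).comp tendsto_abs_atBot_atTop
    refine this.congr fun z => by rw [sq_abs]
  have h2 := (Real.tendsto_exp_atBot.comp h1).const_mul (Real.sqrt (2 * Real.pi))⁻¹
  simpa [stdNormalPDF] using h2.neg

lemma integral_Iic_mul_stdNormalPDF (c : ℝ) :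
    ∫ z in Set.Iic c, z * stdNormalPDF z = -stdNormalPDF c := by
  have := integral_Iic_of_hasDerivAt_of_tendsto' (a := c)
    (fun x _ => hasDerivAt_neg_stdNormalPDF x) integrable_mul_stdNormalPDF.integrableOn
    tendsto_stdNormalPDF_atBot
  simpa using this

/-- **Closed form of the expected improvement.**  If `Y ∼ N(μ, σ²)` with `σ > 0` and
`y* ∈ ℝ`, then `E[max(y* − Y, 0)] = (y* − μ) Φ((y* − μ)/σ) + σ φ((y* − μ)/σ)`. -/
theorem expected_improvement_closed_form (μ σ ystar : ℝ) (hσ : 0 < σ) :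
    ∫ y, max (ystar - y) 0 ∂(gaussianReal μ ⟨σ ^ 2, sq_nonneg σ⟩)
      = (ystar - μ) * stdNormalCDF ((ystar - μ) / σ)
        + σ * stdNormalPDF ((ystar - μ) / σ) := by
  set c : ℝ := (ystar - μ) / σ with hc
  -- step 1: gaussianReal μ σ² = map (σ*·+μ) std gaussian
  have hmap : gaussianReal μ ⟨σ ^ 2, sq_nonneg σ⟩
      = Measure.map (fun z => σ * z + μ) (gaussianReal 0 1) := by
    have h1 : (gaussianReal 0 1).map (σ * ·) = gaussianReal 0 ⟨σ ^ 2, sq_nonneg σ⟩ := by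
      rw [gaussianReal_map_const_mul]
      congr 1
      · ring
      · ext; simp; rfl
    have h2 := gaussianReal_map_add_const (μ := 0) (v := ⟨σ ^ 2, sq_nonneg σ⟩) μ
    rw [zero_add] at h2
    rw [← h2, ← h1, Measure.map_map (by fun_prop) (by fun_prop)]
    rfl
  rw [hmap, integral_map (by fun_prop)
    (Continuous.aestronglyMeasurable (by fun_prop))]
  -- step 2: std gaussian as withDensity
  have h1 : gaussianReal 0 1 = volume.withDensity
      (fun x => ((gaussianPDFReal 0 1 x).toNNReal : ENNReal)) := by
    rw [gaussianReal_of_var_ne_zero 0 one_ne_zero]; rfl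
  rw [h1, integral_withDensity_eq_integral_smul
    ((measurable_gaussianPDFReal 0 1).real_toNNReal)]
  have heq : ∀ z : ℝ, (gaussianPDFReal 0 1 z).toNNReal • max (ystar - (σ * z + μ)) 0
      = Set.indicator (Set.Iic c) (fun z => σ * (stdNormalPDF z * (c - z))) z := by
    intro z
    rw [NNReal.smul_def, smul_eq_mul, Real.coe_toNNReal _ (gaussianPDFReal_nonneg 0 1 z),
      stdNormalPDF_eq_gaussian]
    by_cases hz : z ≤ c
    · rw [Set.indicator_of_mem (Set.mem_Iic.2 hz)]
      have : ystar - (σ * z + μ) = σ * (c - z) := by rw [hc]; field_simp; ring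
      rw [this, max_eq_left (mul_nonneg hσ.le (sub_nonneg.2 hz))]
      ring
    · rw [Set.indicator_of_notMem (by simpa using hz)]
      have : ystar - (σ * z + μ) ≤ 0 := by
        push_neg at hz
        have hsc : σ * c = ystar - μ := by rw [hc]; field_simp
        nlinarith [mul_lt_mul_of_pos_left hz hσ]
      rw [max_eq_right this, mul_zero]
  simp_rw [heq]
  rw [integral_indicator measurableSet_Iic]
  have hsplit : ∀ z : ℝ, σ * (stdNormalPDF z * (c - z))
      = σ * (c * stdNormalPDF z) - σ * (z * stdNormalPDF z) := fun z => by ring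
  simp_rw [hsplit]
  rw [integral_sub ((integrable_stdNormalPDF.integrableOn.const_mul c).const_mul σ)
      (integrable_mul_stdNormalPDF.integrableOn.const_mul σ),
    integral_const_mul, integral_const_mul, integral_const_mul,
    integral_Iic_mul_stdNormalPDF]
  have hΦ : ∫ z in Set.Iic c, stdNormalPDF z = stdNormalCDF c := rfl
  rw [hΦ]
  have hσc : σ * c = ystar - μ := by rw [hc]; field_simp
  rw [← hσc]; ring
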